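/- In the concrete autonomous-car model, the narrative σ1 is executable from both S0 and S0*, and the effect damaged holds at the end of both runs, i.e. (run σ1 S0).damaged = true and (run σ1 S0*).damaged = true (so the agent knows the effect); yet {i | AchCause σ1 S0 (fun s => s.damaged = true) i} = {0, 2, 3, 4} while {i | AchCause σ1 S0* (fun s => s.damaged = true) i} = {0, 1}. In particular the two achievement causal chains have different cardinalities, hence are not K-related, so the agent — whose initial knowledge admits both S0 and S0* — does not know in σ1 the achievement causal chain of the causal setting with narrative σ1 and effect damaged (Theorem 1: epistemic causality differs from objective causality). -/
import Mathlib


inductive Loc : Type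
  | I | J | K
deriving DecidableEq

open Loc

def connected : Loc → Loc → Prop
  | I, J => True
  | J, I => True
  | J, K => True
  | K, J => True
  | _, _ => False

inductive Act : Type
  | drive (i j : Loc)
  | turn (i : Loc)
  | hack
deriving DecidableEq

open Act

structure State : Type where
  pos : Loc
  corrupted : Bool
  damaged : Bool

def step : Act → State → State
  | drive _ j, s => ⟨j, s.corrupted, s.damaged⟩
  | turn _, s => ⟨s.pos, s.corrupted, s.corrupted || s.damaged⟩
  | hack, s => ⟨s.pos, true, s.damaged⟩

def poss : Act → State → Prop
  | drive i j, s => s.pos = i ∧ i ≠ j ∧ connected i j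
  | turn i, s => s.pos = i
  | hack, _ => True

def run (l : List Act) (s : State) : State :=
  l.foldl (fun t a => step a t) s

def executable (l : List Act) (s : State) : Prop :=
  ∀ k : Fin l.length, poss (l.get k) (run (l.take k) s)

def σ1 : List Act := [drive I J, turn J, hack, drive J K, turn K]

def S0 : State := ⟨I, false, false⟩

def S0star : State := ⟨I, true, false⟩

def AchCause : List Act → State → (State → Prop) → ℕ → Prop
  | l, s0, φ, i =>
    ∃ j, ∃ _h1 : 1 ≤ j, ∃ _h2 : j ≤ l.length,
      ¬ φ (run (l.take (j - 1)) s0) ∧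
      (∀ k, j ≤ k → k ≤ l.length → φ (run (l.take k) s0)) ∧
      (i = j - 1 ∨
        AchCause (l.take (j - 1)) s0
          (fun s => φ (step (l.get ⟨j - 1, by omega⟩) s) ∧
            poss (l.get ⟨j - 1, by omega⟩) s) i)
  termination_by l _ _ _ => l.length
  decreasing_by simp [List.length_take]; omega

instance (i j : Loc) : Decidable (connected i j) := by
  cases i <;> cases j <;> unfold connected <;>
    first | exact .isTrue trivial | exact .isFalse id

instance (a : Act) (s : State) : Decidable (poss a s) := by
  cases a <;> unfold poss <;> infer_instance

def φ0 : State → Prop := fun s => s.damaged = true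

def nxt (a : Act) (φ : State → Prop) : State → Prop :=
  fun s => φ (step a s) ∧ poss a s

instance : DecidablePred φ0 := fun s => by unfold φ0; infer_instance

instance (a : Act) (φ : State → Prop) [DecidablePred φ] :
    DecidablePred (nxt a φ) := fun s => by unfold nxt; exact instDecidableAnd

lemma ach_nil (s : State) (φ : State → Prop) (i : ℕ) : ¬ AchCause [] s φ i := by
  rw [AchCause]
  rintro ⟨j, h1, h2, -⟩
  simp at h2; omega

lemma A2 (i : ℕ) :
    AchCause [drive I J, turn J] S0 (nxt hack (nxt (drive J K) (nxt (turn K) φ0))) i ↔ i = 0 := by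
  rw [AchCause]
  constructor
  · rintro ⟨j, h1, h2, hneg, hall, hi⟩
    have h2' : j ≤ 2 := by simpa using h2
    interval_cases j
    · rcases hi with rfl | hrec
      · rfl
      · exact absurd hrec (ach_nil _ _ _)
    · exact absurd (by decide) hneg
  · rintro rfl
    refine ⟨1, le_rfl, by decide, by decide, ?_, Or.inl rfl⟩
    intro k hk1 hk2
    have : k ≤ 2 := by simpa using hk2
    interval_cases k <;> decide

lemma A3 (i : ℕ) :
    AchCause [drive I J, turn J, hack] S0 (nxt (drive J K) (nxt (turn K) φ0)) i ↔
      i = 2 ∨ i = 0 := by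
  rw [AchCause]
  constructor
  · rintro ⟨j, h1, h2, hneg, hall, hi⟩
    have h2' : j ≤ 3 := by simpa using h2
    interval_cases j
    · exact absurd (hall 1 le_rfl (by decide)) (by decide)
    · exact absurd (hall 2 le_rfl (by decide)) (by decide)
    · rcases hi with rfl | hrec
      · exact Or.inl rfl
      · exact Or.inr ((A2 i).mp hrec)
  · rintro (rfl | rfl)
    · refine ⟨3, by omega, by decide, by decide, ?_, Or.inl rfl⟩
      intro k hk1 hk2
      have : k ≤ 3 := by simpa using hk2
      interval_cases k <;> decide
    · refine ⟨3, by omega, by decide, by decide, ?_, Or.inr ((A2 0).mpr rfl)⟩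
      intro k hk1 hk2
      have : k ≤ 3 := by simpa using hk2
      interval_cases k <;> decide

lemma A4 (i : ℕ) :
    AchCause [drive I J, turn J, hack, drive J K] S0 (nxt (turn K) φ0) i ↔
      i = 3 ∨ i = 2 ∨ i = 0 := by
  rw [AchCause]
  constructor
  · rintro ⟨j, h1, h2, hneg, hall, hi⟩
    have h2' : j ≤ 4 := by simpa using h2
    interval_cases j
    · exact absurd (hall 1 le_rfl (by decide)) (by decide)
    · exact absurd (hall 2 le_rfl (by decide)) (by decide)
    · exact absurd (hall 3 le_rfl (by decide)) (by decide)
    · rcases hi with rfl | hrec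
      · exact Or.inl rfl
      · exact Or.inr ((A3 i).mp hrec)
  · have hall4 : ∀ k, 4 ≤ k → k ≤ List.length [drive I J, turn J, hack, drive J K] →
        (nxt (turn K) φ0) (run (List.take k [drive I J, turn J, hack, drive J K]) S0) := by
      intro k hk1 hk2
      have : k ≤ 4 := by simpa using hk2
      interval_cases k <;> decide
    rintro (rfl | rfl | rfl)
    · exact ⟨4, by omega, by decide, by decide, hall4, Or.inl rfl⟩
    · exact ⟨4, by omega, by decide, by decide, hall4, Or.inr ((A3 2).mpr (Or.inl rfl))⟩
    · exact ⟨4, by omega, by decide, by decide, hall4, Or.inr ((A3 0).mpr (Or.inr rfl))⟩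

lemma A5 (i : ℕ) :
    AchCause σ1 S0 φ0 i ↔ i = 4 ∨ i = 3 ∨ i = 2 ∨ i = 0 := by
  rw [AchCause]
  constructor
  · rintro ⟨j, h1, h2, hneg, hall, hi⟩
    have h2' : j ≤ 5 := by simpa [σ1] using h2
    interval_cases j
    · exact absurd (hall 1 le_rfl (by decide)) (by decide)
    · exact absurd (hall 2 le_rfl (by decide)) (by decide)
    · exact absurd (hall 3 le_rfl (by decide)) (by decide)
    · exact absurd (hall 4 le_rfl (by decide)) (by decide)
    · rcases hi with rfl | hrec
      · exact Or.inl rfl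
      · exact Or.inr ((A4 i).mp hrec)
  · have hall5 : ∀ k, 5 ≤ k → k ≤ List.length σ1 → φ0 (run (List.take k σ1) S0) := by
      intro k hk1 hk2
      have : k ≤ 5 := by simpa [σ1] using hk2
      interval_cases k <;> decide
    rintro (rfl | rfl | rfl | rfl)
    · exact ⟨5, by omega, by decide, by decide, hall5, Or.inl rfl⟩
    · exact ⟨5, by omega, by decide, by decide, hall5, Or.inr ((A4 3).mpr (Or.inl rfl))⟩
    · exact ⟨5, by omega, by decide, by decide, hall5, Or.inr ((A4 2).mpr (Or.inr (Or.inl rfl)))⟩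
    · exact ⟨5, by omega, by decide, by decide, hall5, Or.inr ((A4 0).mpr (Or.inr (Or.inr rfl)))⟩

lemma B1 (i : ℕ) :
    AchCause [drive I J] S0star (nxt (turn J) φ0) i ↔ i = 0 := by
  rw [AchCause]
  constructor
  · rintro ⟨j, h1, h2, hneg, hall, hi⟩
    have h2' : j ≤ 1 := by simpa using h2
    interval_cases j
    rcases hi with rfl | hrec
    · rfl
    · exact absurd hrec (ach_nil _ _ _)
  · rintro rfl
    refine ⟨1, le_rfl, by decide, by decide, ?_, Or.inl rfl⟩
    intro k hk1 hk2
    have : k ≤ 1 := by simpa using hk2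
    interval_cases k <;> decide

lemma B2 (i : ℕ) :
    AchCause σ1 S0star φ0 i ↔ i = 1 ∨ i = 0 := by
  rw [AchCause]
  constructor
  · rintro ⟨j, h1, h2, hneg, hall, hi⟩
    have h2' : j ≤ 5 := by simpa [σ1] using h2
    interval_cases j
    · exact absurd (hall 1 le_rfl (by decide)) (by decide)
    · rcases hi with rfl | hrec
      · exact Or.inl rfl
      · exact Or.inr ((B1 i).mp hrec)
    · exact absurd (by decide) hneg
    · exact absurd (by decide) hneg
    · exact absurd (by decide) hneg
  · have hall2 : ∀ k, 2 ≤ k → k ≤ List.length σ1 → φ0 (run (List.take k σ1) S0star) := by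
      intro k hk1 hk2
      have : k ≤ 5 := by simpa [σ1] using hk2
      interval_cases k <;> decide
    rintro (rfl | rfl)
    · exact ⟨2, by omega, by decide, by decide, hall2, Or.inl rfl⟩
    · exact ⟨2, by omega, by decide, by decide, hall2, Or.inr ((B1 0).mpr rfl)⟩

/-- Theorem 1: epistemic causality differs from objective causality:
σ1 is executable from both initial states S0 and S0* compatible with the agent's
initial knowledge, and the effect `damaged` holds at the end of both runs (so the
agent knows the effect); yet the achievement causal chains computed in the two
epistemic alternatives are {0, 2, 3, 4} and {0, 1}, which have different
cardinalities and hence are not K-related: the agent does not know in σ1 the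
achievement causal chain of the causal setting ⟨σ1, damaged⟩. -/
theorem epistemic_causality_differs_from_objective :
    executable σ1 S0 ∧ executable σ1 S0star ∧
    (run σ1 S0).damaged = true ∧ (run σ1 S0star).damaged = true ∧
    {i : ℕ | AchCause σ1 S0 (fun s => s.damaged = true) i} = ({0, 2, 3, 4} : Set ℕ) ∧
    {i : ℕ | AchCause σ1 S0star (fun s => s.damaged = true) i} = ({0, 1} : Set ℕ) ∧
    ({0, 2, 3, 4} : Set ℕ).ncard ≠ ({0, 1} : Set ℕ).ncard ∧
    {i : ℕ | AchCause σ1 S0 (fun s => s.damaged = true) i} ≠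
      {i : ℕ | AchCause σ1 S0star (fun s => s.damaged = true) i} := by
  have hA : {i : ℕ | AchCause σ1 S0 (fun s => s.damaged = true) i} = ({0, 2, 3, 4} : Set ℕ) := by
    ext i
    simp only [Set.mem_setOf_eq, Set.mem_insert_iff, Set.mem_singleton_iff]
    rw [show (fun s : State => s.damaged = true) = φ0 from rfl, A5]
    tauto
  have hB : {i : ℕ | AchCause σ1 S0star (fun s => s.damaged = true) i} = ({0, 1} : Set ℕ) := by
    ext i
    simp only [Set.mem_setOf_eq, Set.mem_insert_iff, Set.mem_singleton_iff]
    rw [show (fun s : State => s.damaged = true) = φ0 from rfl, B2]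
    tauto
  have hc1 : ({0, 2, 3, 4} : Set ℕ).ncard = 4 := by
    rw [Set.ncard_insert_of_notMem (by norm_num),
        Set.ncard_insert_of_notMem (by norm_num),
        Set.ncard_pair (by norm_num)]
  have hc2 : ({0, 1} : Set ℕ).ncard = 2 := Set.ncard_pair (by norm_num)
  refine ⟨?_, ?_, by decide, by decide, hA, hB, by omega, ?_⟩
  · intro k; fin_cases k <;> decide
  · intro k; fin_cases k <;> decide
  · intro heq
    rw [hA, hB] at heq
    have h2 : (2 : ℕ) ∈ ({0, 1} : Set ℕ) := heq ▸ (by norm_num)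
    simp at h2
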